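/- arXiv:2512.12698 — 4 statements merged into one kernel-verified Lean document; each statement's English description precedes it below -/
import Mathlib

section
/- Let n be a natural number and E = ℝⁿ (Euclidean space). Let Φ, Ψ : E → E be proper continuous maps and K ⊆ E a compact set with Φ(x) = Ψ(x) for all x ∉ K. Let Φ̄, Ψ̄ : OnePoint E → OnePoint E be the extensions defined by Φ̄(x) = Φ(x) and Ψ̄(x) = Ψ(x) for x ∈ E and Φ̄(∞) = Ψ̄(∞) = ∞. Then the map H : OnePoint E × ℝ → OnePoint E defined by H(x, s) = (1 − s)·Φ(x) + s·Ψ(x) for x ∈ E and H(∞, s) = ∞ is continuous; in particular Φ̄ and Ψ̄ are continuous and are homotopic as continuous self-maps of OnePoint E. -/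
open Filter Topology
open scoped OnePoint

/-- The extension of a self-map of `E` to the one-point compactification,
sending `∞` to `∞`. -/
def onePointExtend {E : Type*} (f : E → E) : OnePoint E → OnePoint E :=
  Option.map f

lemma onePointExtend_coe {E : Type*} (f : E → E) (x : E) :
    onePointExtend f (x : OnePoint E) = (f x : OnePoint E) := rfl

lemma onePointExtend_infty {E : Type*} (f : E → E) :
    onePointExtend f (∞ : OnePoint E) = ∞ := rfl

lemma isProperMap_tendsto_cocompact {E F : Type*} [TopologicalSpace E] [TopologicalSpace F]
    {f : E → F} (hf : IsProperMap f) : Tendsto f (cocompact E) (cocompact F) := by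
  rw [hasBasis_cocompact.tendsto_right_iff]
  intro K hK
  have h := hf.isCompact_preimage hK
  filter_upwards [h.compl_mem_cocompact] with x hx
  simpa using hx

lemma onePointExtend_continuous {E : Type*} [TopologicalSpace E] [T2Space E]
    {f : E → E} (hf : IsProperMap f) : Continuous (onePointExtend f) := by
  rw [OnePoint.continuous_iff]
  constructor
  · show Tendsto (fun x : E => ((f x : OnePoint E))) (coclosedCompact E) (𝓝 ∞)
    have h1 : Tendsto f (coclosedCompact E) (coclosedCompact E) := by
      rw [coclosedCompact_eq_cocompact]
      exact isProperMap_tendsto_cocompact hf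
    exact OnePoint.tendsto_coe_infty.comp h1
  · exact OnePoint.continuous_coe.comp hf.continuous

/-- Proper continuous self-maps of Euclidean space agreeing outside a compact set
extend continuously to the one-point compactification, the straight-line homotopy
between them extends continuously as well, and the extensions are homotopic. -/
theorem onePoint_extension_homotopic
    (n : ℕ)
    (Φ Ψ : EuclideanSpace ℝ (Fin n) → EuclideanSpace ℝ (Fin n))
    (hΦ : IsProperMap Φ) (hΨ : IsProperMap Ψ)
    (K : Set (EuclideanSpace ℝ (Fin n))) (hK : IsCompact K)
    (hagree : ∀ x ∉ K, Φ x = Ψ x) :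
    Continuous (fun q : OnePoint (EuclideanSpace ℝ (Fin n)) × ℝ =>
      onePointExtend (fun y => (1 - q.2) • Φ y + q.2 • Ψ y) q.1) ∧
    ∃ (hΦc : Continuous (onePointExtend Φ)) (hΨc : Continuous (onePointExtend Ψ)),
      ContinuousMap.Homotopic ⟨onePointExtend Φ, hΦc⟩ ⟨onePointExtend Ψ, hΨc⟩ := by
  let E := EuclideanSpace ℝ (Fin n)
  set H : OnePoint E × ℝ → OnePoint E := fun q =>
    onePointExtend (fun y => (1 - q.2) • Φ y + q.2 • Ψ y) q.1 with hH
  have hΦc := onePointExtend_continuous hΦ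
  have hΨc := onePointExtend_continuous hΨ
  have hHcont : Continuous H := by
    rw [continuous_iff_continuousAt]
    rintro ⟨x, s⟩
    induction x using OnePoint.rec with
    | infty =>
      -- near (∞, s), H agrees with `onePointExtend Φ ∘ Prod.fst`
      have hmem : ((↑) '' Kᶜ ∪ {∞} : Set (OnePoint E)) ∈ 𝓝 (∞ : OnePoint E) :=
        OnePoint.hasBasis_nhds_infty.mem_of_mem ⟨hK.isClosed, hK⟩
      have heq : H =ᶠ[𝓝 ((∞ : OnePoint E), s)]
          fun q => onePointExtend Φ q.1 := by
        have : ((↑) '' Kᶜ ∪ {∞} : Set (OnePoint E)) ×ˢ (Set.univ : Set ℝ) ∈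
            𝓝 ((∞ : OnePoint E), s) := prod_mem_nhds hmem univ_mem
        filter_upwards [this] with q hq
        obtain ⟨q1, q2⟩ := q
        rcases hq.1 with ⟨y, hy, rfl⟩ | hq1
        · have : Φ y = Ψ y := hagree y hy
          show ((((1 - q2) • Φ y + q2 • Ψ y : E)) : OnePoint E) = (Φ y : OnePoint E)
          rw [← this]
          congr 1
          rw [← add_smul]
          simp
        · simp only [Set.mem_singleton_iff] at hq1
          rw [hq1]
          rfl
      have : ContinuousAt (fun q : OnePoint E × ℝ => onePointExtend Φ q.1)
          ((∞ : OnePoint E), s) :=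
        (hΦc.comp continuous_fst).continuousAt
      exact this.congr heq.symm
    | coe x =>
      -- near (↑x, s), use that coe is an open embedding
      have hoe : IsOpenEmbedding (fun p : E × ℝ => ((p.1 : OnePoint E), p.2)) :=
        OnePoint.isOpenEmbedding_coe.prodMap IsOpenEmbedding.id
      have hmap : Filter.map (fun p : E × ℝ => ((p.1 : OnePoint E), p.2)) (𝓝 (x, s)) =
          𝓝 (((x : OnePoint E), s)) := hoe.map_nhds_eq (x, s)
      unfold ContinuousAt
      rw [← hmap, tendsto_map'_iff]
      have : (H ∘ fun p : E × ℝ => ((p.1 : OnePoint E), p.2)) =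
          fun p : E × ℝ => (((1 - p.2) • Φ p.1 + p.2 • Ψ p.1 : E) : OnePoint E) := rfl
      rw [this]
      exact (OnePoint.continuous_coe.comp (by fun_prop)).tendsto _
  refine ⟨hHcont, hΦc, hΨc, ?_⟩
  refine ⟨⟨⟨fun p => H (p.2, (p.1 : ℝ)), ?_⟩, ?_, ?_⟩⟩
  · exact hHcont.comp (continuous_snd.prodMk (continuous_subtype_val.comp continuous_fst))
  · intro x
    show H (x, (0 : ℝ)) = onePointExtend Φ x
    simp only [hH]
    congr 1
    funext y
    simp
  · intro x
    show H (x, (1 : ℝ)) = onePointExtend Ψ x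
    simp only [hH]
    congr 1
    funext y
    simp
end

section
/- Let K be a compact topological space, let G : K → ℝ be continuous with G(x) ≥ 0 for all x, let U ⊆ K be an open set containing the zero set {x ∈ K : G(x) = 0}, and let H : K → ℝ be continuous with H(x) ≥ 0 for all x ∈ U. Then for every constant C with 0 < C < 1 there exists ε₀ > 0 such that for every ε with 0 < ε ≤ ε₀ and every x ∈ K one has G(x) + ε·H(x) ≥ C·G(x). -/
/-- If `G ≥ 0` on a compact space and `H ≥ 0` on an open neighborhood of the zero set
of `G`, then for any `0 < C < 1` one has `G + ε·H ≥ C·G` everywhere for all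
sufficiently small `ε > 0`. -/
theorem add_smul_ge_const_mul_of_nonneg_near_zero_set
    (K : Type*) [TopologicalSpace K] [CompactSpace K]
    (G H : K → ℝ) (hG : Continuous G) (hH : Continuous H)
    (hG0 : ∀ x, 0 ≤ G x)
    (U : Set K) (hU : IsOpen U) (hUzero : {x : K | G x = 0} ⊆ U)
    (hHU : ∀ x ∈ U, 0 ≤ H x)
    (C : ℝ) (hC0 : 0 < C) (hC1 : C < 1) :
    ∃ ε₀ > 0, ∀ ε : ℝ, 0 < ε → ε ≤ ε₀ → ∀ x, C * G x ≤ G x + ε * H x := by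
  have hSc : IsCompact Uᶜ := hU.isClosed_compl.isCompact
  rcases Uᶜ.eq_empty_or_nonempty with hS | hS
  · refine ⟨1, one_pos, fun ε hε _ x => ?_⟩
    have hxU : x ∈ U := by
      by_contra h
      have : x ∈ Uᶜ := h
      simp [hS] at this
    have hH0 := hHU x hxU
    nlinarith [hG0 x]
  · obtain ⟨x₀, hx₀S, hmin⟩ := hSc.exists_isMinOn hS (hG.continuousOn)
    set m := G x₀ with hm
    have hm0 : 0 < m := by
      rcases lt_or_eq_of_le (hG0 x₀) with h | h
      · exact h
      · exact absurd (hUzero h.symm) hx₀S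
    obtain ⟨xM, _, hmax⟩ := isCompact_univ.exists_isMaxOn ⟨x₀, trivial⟩
      (hH.abs.continuousOn)
    set M := |H xM| with hM
    have hM0 : 0 < M + 1 := by positivity
    refine ⟨(1 - C) * m / (M + 1), div_pos (by nlinarith) hM0, fun ε hε hεle x => ?_⟩
    by_cases hxU : x ∈ U
    · have hH0 := hHU x hxU
      nlinarith [hG0 x]
    · have hGx : m ≤ G x := hmin hxU
      have hHx : -M ≤ H x := by
        have := hmax (Set.mem_univ x)
        have h2 : |H x| ≤ M := this
        linarith [neg_abs_le (H x)]
      have h1 : ε * (M + 1) ≤ (1 - C) * m := by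
        rw [le_div_iff₀ hM0] at hεle
        exact hεle
      nlinarith
end

section
/- Let K be a compact topological space, let G : K → ℝ be continuous with G(x) ≥ 0 for all x, and let C be a constant with 0 < C < 1. Let H₀ : K → ℝ be continuous with G(x) + H₀(x) > C·G(x) for all x ∈ K. Let U ⊆ K be an open set containing the zero set {x : G(x) = 0} and let H₁ : K → ℝ be continuous with H₁(x) ≥ 0 for all x ∈ U and H₁(x) > 0 for all x with G(x) = 0. Then there exists ε₀ > 0 such that for every ε with 0 < ε ≤ ε₀, every s ∈ [0, 1], and every x ∈ K one has G(x) + (1 − s)·H₀(x) + s·ε·H₁(x) > C·G(x). -/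
/-- Parametric volume inequality: if `G + H₀ > C·G` everywhere, and `H₁ ≥ 0` near the
zero set of `G` and `H₁ > 0` on it, then for all sufficiently small `ε > 0` the whole
convex family `(1−s)·H₀ + s·ε·H₁`, `s ∈ [0,1]`, satisfies the same strict inequality. -/
theorem convex_family_volume_inequality
    (K : Type*) [TopologicalSpace K] [CompactSpace K]
    (G : K → ℝ) (hG : Continuous G) (hG0 : ∀ x, 0 ≤ G x)
    (C : ℝ) (hC0 : 0 < C) (hC1 : C < 1)
    (H₀ : K → ℝ) (hH₀ : Continuous H₀) (hH₀G : ∀ x, C * G x < G x + H₀ x)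
    (U : Set K) (hU : IsOpen U) (hUzero : {x : K | G x = 0} ⊆ U)
    (H₁ : K → ℝ) (hH₁ : Continuous H₁)
    (hH₁U : ∀ x ∈ U, 0 ≤ H₁ x) (hH₁pos : ∀ x, G x = 0 → 0 < H₁ x) :
    ∃ ε₀ > 0, ∀ ε : ℝ, 0 < ε → ε ≤ ε₀ → ∀ s ∈ Set.Icc (0 : ℝ) 1, ∀ x,
      C * G x < G x + (1 - s) * H₀ x + s * ε * H₁ x := by
  set V : Set K := U ∩ {x | 0 < H₀ x} with hVdef
  have hVopen : IsOpen V := hU.inter (isOpen_lt continuous_const hH₀)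
  have hZV : {x : K | G x = 0} ⊆ V := by
    intro x hx
    have hx' : G x = 0 := hx
    exact ⟨hUzero hx, by have := hH₀G x; simp only [Set.mem_setOf_eq]; nlinarith⟩
  -- B := (1-C)G + ε H₁ is positive on V for any ε > 0
  have hBV : ∀ ε : ℝ, 0 < ε → ∀ x ∈ V, 0 < (1 - C) * G x + ε * H₁ x := by
    intro ε hε x hx
    rcases (hG0 x).eq_or_lt with h | h
    · have := hH₁pos x h.symm; nlinarith
    · have := hH₁U x hx.1; nlinarith
  have hGS : ∀ x ∈ Vᶜ, 0 < G x := by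
    intro x hx
    rcases (hG0 x).eq_or_lt with h | h
    · exact absurd (hZV h.symm) hx
    · exact h
  have key : ∀ ε₀ : ℝ, 0 < ε₀ →
      (∀ x ∈ Vᶜ, ε₀ * (1 + |H₁ x|) ≤ (1 - C) * G x) →
      ∀ ε : ℝ, 0 < ε → ε ≤ ε₀ → ∀ s ∈ Set.Icc (0 : ℝ) 1, ∀ x,
        C * G x < G x + (1 - s) * H₀ x + s * ε * H₁ x := by
    intro ε₀ hε₀ hbound ε hε hεle s hs x
    obtain ⟨hs0, hs1⟩ := hs
    have hA : 0 < (1 - C) * G x + H₀ x := by have := hH₀G x; nlinarith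
    have hB : 0 < (1 - C) * G x + ε * H₁ x := by
      by_cases hx : x ∈ V
      · exact hBV ε hε x hx
      · have h1 := hbound x hx
        have h2 : ε * |H₁ x| ≤ ε₀ * |H₁ x| :=
          mul_le_mul_of_nonneg_right hεle (abs_nonneg _)
        nlinarith [neg_abs_le (H₁ x), abs_nonneg (H₁ x), hε.le]
    rcases le_or_gt s (1/2) with h | h
    · nlinarith [mul_nonneg hs0 hB.le]
    · nlinarith [mul_nonneg (by linarith : (0:ℝ) ≤ 1 - s) hA.le]
  by_cases hS : (Vᶜ : Set K).Nonempty
  · have hScomp : IsCompact (Vᶜ : Set K) := hVopen.isClosed_compl.isCompact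
    have hφ : ContinuousOn (fun x => (1 - C) * G x / (1 + |H₁ x|)) Vᶜ := by
      apply ContinuousOn.div
      · exact (continuous_const.mul hG).continuousOn
      · exact (continuous_const.add hH₁.abs).continuousOn
      · intro x _; positivity
    obtain ⟨x₀, hx₀S, hx₀min'⟩ := hScomp.exists_isMinOn hS hφ
    have hx₀min := isMinOn_iff.mp hx₀min'
    refine ⟨(1 - C) * G x₀ / (1 + |H₁ x₀|), ?_, ?_⟩
    · have := hGS x₀ hx₀S
      have h1 : (0:ℝ) < 1 + |H₁ x₀| := by positivity
      apply div_pos (by nlinarith) h1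
    · apply key _ ?_ ?_
      · have := hGS x₀ hx₀S
        have h1 : (0:ℝ) < 1 + |H₁ x₀| := by positivity
        apply div_pos (by nlinarith) h1
      · intro x hx
        have h1 : (0:ℝ) < 1 + |H₁ x| := by positivity
        have h2 := hx₀min x hx
        calc (1 - C) * G x₀ / (1 + |H₁ x₀|) * (1 + |H₁ x|)
            ≤ (1 - C) * G x / (1 + |H₁ x|) * (1 + |H₁ x|) :=
              mul_le_mul_of_nonneg_right h2 h1.le
          _ = (1 - C) * G x := by field_simp
  · refine ⟨1, one_pos, key 1 one_pos ?_⟩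
    intro x hx
    have hempty : (Vᶜ : Set K) = ∅ := Set.not_nonempty_iff_eq_empty.mp hS
    exact absurd (hempty ▸ hx) (Set.notMem_empty x)
end

section
/- Let n be a natural number, E = ℝⁿ (Euclidean space), and let K ⊆ E be a compact set. Let f : E → E and f_k : E → E (k ∈ ℕ) be continuous maps such that f_k converges to f uniformly on E as k → ∞. Let 0 < δ ≤ Λ be real constants, and for each k let T_k ∈ [δ, Λ] and let γ_k : ℝ → E be a curve such that γ_k(t) ∈ K for all t, γ_k has derivative f_k(γ_k(t)) at every t ∈ ℝ, and γ_k(t + T_k) = γ_k(t) for all t. Then there exist T ∈ [δ, Λ] and a curve γ : ℝ → E such that γ(t) ∈ K for all t, γ has derivative f(γ(t)) at every t ∈ ℝ, and γ(t + T) = γ(t) for all t. -/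
open Filter Topology

/-- Arzelà–Ascoli for periodic orbits: given vector fields `f_k` converging uniformly to
`f` and periodic orbits `γ_k` of `f_k` of periods `T_k ∈ [δ, Λ]` lying in a fixed compact
set `K`, there is a periodic orbit of `f` with period in `[δ, Λ]` lying in `K`. -/
theorem exists_periodic_orbit_of_limit
    (n : ℕ)
    (K : Set (EuclideanSpace ℝ (Fin n))) (hK : IsCompact K)
    (f : EuclideanSpace ℝ (Fin n) → EuclideanSpace ℝ (Fin n))
    (fk : ℕ → EuclideanSpace ℝ (Fin n) → EuclideanSpace ℝ (Fin n))
    (hf : Continuous f) (hfk : ∀ k, Continuous (fk k))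
    (hconv : TendstoUniformly fk f atTop)
    (δ Λ : ℝ) (hδ : 0 < δ) (hδΛ : δ ≤ Λ)
    (T : ℕ → ℝ) (hT : ∀ k, T k ∈ Set.Icc δ Λ)
    (γ : ℕ → ℝ → EuclideanSpace ℝ (Fin n))
    (hγK : ∀ k t, γ k t ∈ K)
    (hγ' : ∀ k t, HasDerivAt (γ k) (fk k (γ k t)) t)
    (hγper : ∀ k t, γ k (t + T k) = γ k t) :
    ∃ T₀ ∈ Set.Icc δ Λ, ∃ c : ℝ → EuclideanSpace ℝ (Fin n),
      (∀ t, c t ∈ K) ∧ (∀ t, HasDerivAt c (f (c t)) t) ∧ (∀ t, c (t + T₀) = c t) := by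
  classical
  -- a uniform bound on the vector fields on `K`, eventually in `k`
  obtain ⟨C, hC⟩ := hK.exists_bound_of_continuousOn hf.continuousOn
  set M : ℝ := max C 0 + 1 with hMdef
  have hM0 : 0 ≤ M := by positivity
  have hev : ∀ᶠ k in atTop, ∀ x ∈ K, ‖fk k x‖ ≤ M := by
    have h1 := Metric.tendstoUniformly_iff.mp hconv 1 one_pos
    filter_upwards [h1] with k hk x hx
    have h2 : dist (f x) (fk k x) < 1 := hk x
    have h3 : ‖fk k x‖ ≤ ‖f x‖ + dist (f x) (fk k x) := by
      rw [dist_eq_norm]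
      calc ‖fk k x‖ = ‖f x - (f x - fk k x)‖ := by rw [sub_sub_cancel]
        _ ≤ ‖f x‖ + ‖f x - fk k x‖ := norm_sub_le _ _
    have h4 : ‖f x‖ ≤ max C 0 := le_trans (hC x hx) (le_max_left _ _)
    linarith
  obtain ⟨N, hN⟩ := eventually_atTop.mp hev
  -- Lipschitz bound on the curves, for `k ≥ N`
  have hLip : ∀ k, N ≤ k → ∀ s t : ℝ, dist (γ k s) (γ k t) ≤ M * dist s t := by
    intro k hk s t
    rw [dist_eq_norm, dist_eq_norm]
    exact convex_univ.norm_image_sub_le_of_norm_hasDerivWithin_le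
      (fun x _ => (hγ' k x).hasDerivWithinAt)
      (fun x _ => hN k hk _ (hγK k x)) (Set.mem_univ t) (Set.mem_univ s)
  -- extract a convergent subsequence of periods
  obtain ⟨T₀, hT₀, φ₁, hφ₁, hTconv⟩ := (isCompact_Icc (a := δ) (b := Λ)).tendsto_subseq hT
  -- extract a further subsequence converging pointwise on the rationals
  haveI : CompactSpace ↥K := isCompact_iff_compactSpace.mp hK
  set g : ℕ → (ℚ → ↥K) := fun k q => ⟨γ (φ₁ k) (q : ℝ), hγK _ _⟩ with hg
  obtain ⟨L, φ₂, hφ₂, hLconv⟩ := CompactSpace.tendsto_subseq g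
  set ψ : ℕ → ℕ := φ₁ ∘ φ₂ with hψdef
  have hψ : StrictMono ψ := hφ₁.comp hφ₂
  have hψle : ∀ k, k ≤ ψ k := fun k => hψ.le_apply
  have hQ : ∀ q : ℚ, Tendsto (fun k => γ (ψ k) (q : ℝ)) atTop (𝓝 (L q : EuclideanSpace ℝ (Fin n))) := by
    intro q
    have := (continuous_apply q).continuousAt.tendsto.comp hLconv
    exact (continuous_subtype_val.continuousAt.tendsto.comp this)
  -- the subsequence converges pointwise everywhere
  have key : ∀ t : ℝ, ∃ x, Tendsto (fun k => γ (ψ k) t) atTop (𝓝 x) := by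
    intro t
    apply cauchySeq_tendsto_of_complete
    rw [Metric.cauchySeq_iff]
    intro ε hε
    have hε' : 0 < ε / (4 * (M + 1)) := by positivity
    obtain ⟨q, hq⟩ := exists_rat_near t hε'
    have hclose : ∀ k, N ≤ ψ k → dist (γ (ψ k) t) (γ (ψ k) (q : ℝ)) ≤ ε / 4 := by
      intro k hk
      have h1 := hLip (ψ k) hk t q
      have h2 : dist t (q : ℝ) ≤ ε / (4 * (M + 1)) := by
        rw [Real.dist_eq]; exact le_of_lt hq
      have h3 : M * dist t (q : ℝ) ≤ M * (ε / (4 * (M + 1))) :=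
        mul_le_mul_of_nonneg_left h2 hM0
      have h4 : M * (ε / (4 * (M + 1))) ≤ ε / 4 := by
        rw [← mul_div_assoc, div_le_div_iff₀ (by positivity) (by norm_num : (0:ℝ) < 4)]
        nlinarith [mul_nonneg (le_of_lt hε) hM0]
      exact le_trans h1 (le_trans h3 h4)
    obtain ⟨N₂, hN₂⟩ := Metric.cauchySeq_iff.mp (hQ q).cauchySeq (ε / 4) (by positivity)
    refine ⟨max N N₂, fun m hm l hl => ?_⟩
    have hmN : N ≤ ψ m := le_trans (le_trans (le_max_left _ _) hm) (hψle m)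
    have hlN : N ≤ ψ l := le_trans (le_trans (le_max_left _ _) hl) (hψle l)
    have h5 := hclose m hmN
    have h6 := hclose l hlN
    have h7 := hN₂ m (le_trans (le_max_right _ _) hm) l (le_trans (le_max_right _ _) hl)
    calc dist (γ (ψ m) t) (γ (ψ l) t)
        ≤ dist (γ (ψ m) t) (γ (ψ m) (q : ℝ)) + dist (γ (ψ m) (q : ℝ)) (γ (ψ l) (q : ℝ))
            + dist (γ (ψ l) (q : ℝ)) (γ (ψ l) t) := dist_triangle4 _ _ _ _
      _ < ε / 4 + ε / 4 + ε / 4 := by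
          have := dist_comm (γ (ψ l) (q : ℝ)) (γ (ψ l) t)
          apply add_lt_add_of_lt_of_le (add_lt_add_of_le_of_lt h5 h7)
          rw [dist_comm]; exact h6
      _ ≤ ε := by linarith
  choose c hc using key
  -- the limit curve lies in `K`
  have hcK : ∀ t, c t ∈ K := fun t =>
    hK.isClosed.mem_of_tendsto (hc t) (Eventually.of_forall fun k => hγK _ _)
  -- the limit curve is Lipschitz, hence continuous
  have hcLip : ∀ s t : ℝ, dist (c s) (c t) ≤ M * dist s t := by
    intro s t
    refine le_of_tendsto ((hc s).dist (hc t)) ?_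
    filter_upwards [eventually_ge_atTop N] with k hk
    exact hLip (ψ k) (le_trans hk (hψle k)) s t
  have ccont : Continuous c := by
    refine LipschitzWith.continuous (K := Real.toNNReal M) ?_
    refine LipschitzWith.of_dist_le_mul fun s t => ?_
    simpa [Real.coe_toNNReal M hM0] using hcLip s t
  -- continuity of the curves
  have hγcont : ∀ k, Continuous (γ k) := fun k =>
    continuous_iff_continuousAt.mpr fun s => (hγ' k s).differentiableAt.continuousAt
  -- integral equation for each curve
  have hint : ∀ k (t : ℝ), γ k t = γ k 0 + ∫ s in (0:ℝ)..t, fk k (γ k s) := by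
    intro k t
    have hcont : Continuous fun s => fk k (γ k s) := (hfk k).comp (hγcont k)
    have h := intervalIntegral.integral_eq_sub_of_hasDerivAt
      (f := γ k) (f' := fun s => fk k (γ k s)) (a := 0) (b := t)
      (fun s _ => hγ' k s) (hcont.intervalIntegrable 0 t)
    rw [h]; abel
  -- uniform convergence along the subsequence
  have hψtop : Tendsto ψ atTop atTop := hψ.tendsto_atTop
  have hconvψ : TendstoUniformly (fun k => fk (ψ k)) f atTop :=
    fun u hu => hψtop.eventually (hconv u hu)
  have hptw : ∀ s : ℝ, Tendsto (fun k => fk (ψ k) (γ (ψ k) s)) atTop (𝓝 (f (c s))) :=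
    fun s => hconvψ.tendsto_comp hf.continuousAt (hc s)
  -- integral equation for the limit curve
  have heq : ∀ t : ℝ, c t = c 0 + ∫ s in (0:ℝ)..t, f (c s) := by
    intro t
    have h2 : Tendsto (fun k => γ (ψ k) 0 + ∫ s in (0:ℝ)..t, fk (ψ k) (γ (ψ k) s)) atTop
        (𝓝 (c 0 + ∫ s in (0:ℝ)..t, f (c s))) := by
      refine (hc 0).add ?_
      refine intervalIntegral.tendsto_integral_filter_of_dominated_convergence
        (fun _ => M) ?_ ?_ (intervalIntegrable_const) ?_
      · exact Eventually.of_forall fun k =>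
          (((hfk (ψ k)).comp (hγcont (ψ k))).aestronglyMeasurable).restrict
      · filter_upwards [eventually_ge_atTop N] with k hk
        exact MeasureTheory.ae_of_all _ fun x _ =>
          hN (ψ k) (le_trans hk (hψle k)) _ (hγK _ _)
      · exact MeasureTheory.ae_of_all _ fun s _ => hptw s
    have h1 : Tendsto (fun k => γ (ψ k) t) atTop (𝓝 (c 0 + ∫ s in (0:ℝ)..t, f (c s))) :=
      h2.congr fun k => (hint (ψ k) t).symm
    exact tendsto_nhds_unique (hc t) h1
  -- the limit curve is an orbit of `f`
  have hcderiv : ∀ t, HasDerivAt c (f (c t)) t := by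
    intro t
    have hfc : Continuous fun s => f (c s) := hf.comp ccont
    have h := intervalIntegral.integral_hasDerivAt_right
      (hfc.intervalIntegrable 0 t)
      (hfc.stronglyMeasurableAtFilter _ _)
      hfc.continuousAt
    have h2 := h.const_add (c 0)
    exact h2.congr_of_eventuallyEq (Eventually.of_forall fun u => heq u)
  -- periodicity of the limit curve
  have hTψ : Tendsto (fun k => T (ψ k)) atTop (𝓝 T₀) := by
    have := hTconv.comp hφ₂.tendsto_atTop
    exact this
  have hper : ∀ t, c (t + T₀) = c t := by
    intro t
    have h2 : Tendsto (fun k => γ (ψ k) (t + T (ψ k))) atTop (𝓝 (c t)) :=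
      (hc t).congr fun k => (hγper (ψ k) t).symm
    have hd : Tendsto (fun k => dist (γ (ψ k) (t + T (ψ k))) (γ (ψ k) (t + T₀))) atTop (𝓝 0) := by
      have hb : Tendsto (fun k => M * dist (T (ψ k)) T₀) atTop (𝓝 0) := by
        have hdd : Tendsto (fun k => dist (T (ψ k)) T₀) atTop (𝓝 (dist T₀ T₀)) :=
          hTψ.dist (tendsto_const_nhds (x := T₀))
        have := hdd.const_mul M
        simpa using this
      refine squeeze_zero' (Eventually.of_forall fun k => dist_nonneg) ?_ hb
      filter_upwards [eventually_ge_atTop N] with k hk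
      have h1 := hLip (ψ k) (le_trans hk (hψle k)) (t + T (ψ k)) (t + T₀)
      have h3 : dist (t + T (ψ k)) (t + T₀) = dist (T (ψ k)) T₀ := by
        rw [Real.dist_eq, Real.dist_eq]; ring_nf
      rw [h3] at h1; exact h1
    have h1 : Tendsto (fun k => γ (ψ k) (t + T₀)) atTop (𝓝 (c t)) :=
      h2.congr_dist hd
    exact tendsto_nhds_unique (hc _) h1
  exact ⟨T₀, hT₀, c, hcK, hcderiv, hper⟩
end
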